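/- Define f̄_T(x) = -Ψ(1)Φ(x₁) + Σ_{i=2}^{T} [Ψ(-x_{i-1})Φ(-x_i) - Ψ(x_{i-1})Φ(x_i)]. Then for all x ∈ ℝ^T, ‖∇f̄_T(x)‖_∞ ≤ 23 and ‖∇f̄_T(x)‖₂ ≤ 23√T. -/

import Mathlib

open scoped BigOperators

/-- Ψ(x) = 0 for x ≤ 1/2 and exp(1 - 1/(2x-1)²) for x > 1/2. -/
noncomputable def Psi (x : ℝ) : ℝ :=
  if x ≤ 1/2 then 0 else Real.exp (1 - 1 / (2*x - 1)^2)

/-- Φ(y) = √e · ∫_{-∞}^y e^{-t²/2} dt. -/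
noncomputable def Phi (y : ℝ) : ℝ :=
  Real.sqrt (Real.exp 1) * ∫ t in Set.Iic y, Real.exp (-t^2/2)

/-- The Nesterov-style hard instance f̄_T (0-indexed coordinates). -/
noncomputable def fbar (T : ℕ) (x : Fin T → ℝ) : ℝ :=
  ∑ i : Fin T,
    if (i : ℕ) = 0 then -(Psi 1 * Phi (x i))
    else Psi (-(x ⟨i.1 - 1, lt_of_le_of_lt (Nat.sub_le _ _) i.isLt⟩)) * Phi (-(x i))
         - Psi (x ⟨i.1 - 1, lt_of_le_of_lt (Nat.sub_le _ _) i.isLt⟩) * Phi (x i)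

/-- j-th partial derivative of f̄_T at x. -/
noncomputable def fpartial (T : ℕ) (x : Fin T → ℝ) (j : Fin T) : ℝ :=
  deriv (fun s => fbar T (Function.update x j s)) (x j)

/-!
The `j`-th coordinate enters `fbar` only through the summands `i = j` and `i = j + 1`, and every
summand has the form `Ψ(-a)Φ(-b) - Ψ(a)Φ(b)` (with `a = 1` for `i = 0`, as `Ψ(-1) = 0`). Since `Ψ`
vanishes on `(-∞, 1/2]`, at most one of `Ψ(a)`, `Ψ(-a)`, and likewise of `Ψ'(a)`, `Ψ'(-a)`, is
nonzero. Hence `|∂ⱼ fbar| ≤ sup Ψ · sup Φ' + sup |Ψ'| · sup Φ = e · √e + √(54/e) · √(2πe) < 23`,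
where `sup |Ψ'| = √(54/e)` is the maximum of `4 e s^{3/2} e^{-s}` (attained at `s = 3/2`, with
`s = 1/(2x-1)²`). The Euclidean bound follows from the coordinatewise one.
-/

open Real Set Topology MeasureTheory Asymptotics

theorem mul_exp_one_sub_le_one (t : ℝ) : t * exp (1 - t) ≤ 1 := by
  have h : t ≤ exp (t - 1) := by linarith [add_one_le_exp (t - 1)]
  calc t * exp (1 - t) ≤ exp (t - 1) * exp (1 - t) := by gcongr
    _ = 1 := by rw [← exp_add]; simp

theorem hasDerivAt_zero_of_abs_sub_le_mul_sq {f : ℝ → ℝ} {x C : ℝ}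
    (h : ∀ y, |f y - f x| ≤ C * (y - x) ^ 2) : HasDerivAt f 0 x := by
  refine .of_isLittleO ?_
  simp only [smul_zero, sub_zero]
  refine (isBigO_of_le' (c := C) _ fun y => ?_).trans_isLittleO
    (isLittleO_pow_sub_sub x one_lt_two)
  simpa [Real.norm_eq_abs, sq_abs] using h y

noncomputable def Psi' (x : ℝ) : ℝ := Psi x * (4 / (2 * x - 1) ^ 3)

theorem Psi_of_le {x : ℝ} (h : x ≤ 1 / 2) : Psi x = 0 := if_pos h

theorem Psi_of_gt {x : ℝ} (h : 1 / 2 < x) : Psi x = exp (1 - 1 / (2 * x - 1) ^ 2) :=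
  if_neg h.not_ge

theorem Psi_nonneg (x : ℝ) : 0 ≤ Psi x := by
  unfold Psi; split_ifs <;> positivity

theorem abs_Psi_le (x : ℝ) : |Psi x| ≤ exp 1 := by
  rw [abs_of_nonneg (Psi_nonneg x)]
  unfold Psi; split_ifs
  · positivity
  · gcongr; linarith [show 0 ≤ 1 / (2 * x - 1) ^ 2 by positivity]

theorem Psi_eq_zero_or_Psi_neg_eq_zero (x : ℝ) : Psi x = 0 ∨ Psi (-x) = 0 := by
  rcases le_or_gt x (1 / 2) with h | h
  · exact .inl (Psi_of_le h)
  · exact .inr (Psi_of_le (by linarith))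

theorem Psi'_eq_zero_or_Psi'_neg_eq_zero (x : ℝ) : Psi' x = 0 ∨ Psi' (-x) = 0 := by
  rcases Psi_eq_zero_or_Psi_neg_eq_zero x with h | h <;> simp [Psi', h]

theorem Psi_le_four_mul_sq {x y : ℝ} (hx : x ≤ 1 / 2) : Psi y ≤ 4 * (y - x) ^ 2 := by
  rcases le_or_gt y (1 / 2) with hy | hy
  · rw [Psi_of_le hy]; positivity
  have hu : 0 < 2 * y - 1 := by linarith
  have h := mul_exp_one_sub_le_one (1 / (2 * y - 1) ^ 2)
  rw [Psi_of_gt hy]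
  calc exp (1 - 1 / (2 * y - 1) ^ 2) ≤ (2 * y - 1) ^ 2 := by
        rwa [div_mul_eq_mul_div, one_mul, div_le_one (by positivity)] at h
    _ ≤ 4 * (y - x) ^ 2 := by nlinarith

theorem sq_Psi'_le (x : ℝ) : Psi' x ^ 2 ≤ 54 / exp 1 := by
  rcases le_or_gt x (1 / 2) with hx | hx
  · rw [Psi', Psi_of_le hx, zero_mul, zero_pow two_ne_zero]
    positivity
  set s := 1 / (2 * x - 1) ^ 2 with hs
  have hu : 0 < 2 * x - 1 := by linarith
  have h := pow_le_pow_left₀ (by positivity) (mul_exp_one_sub_le_one (2 * s / 3)) 3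
  have hexp : exp (1 - 2 * s / 3) ^ 3 = exp (2 - 2 * s) * exp 1 := by
    rw [← exp_nat_mul, ← exp_add]; ring_nf
  have hΨ' : Psi' x ^ 2 = 16 * s ^ 3 * exp (2 - 2 * s) := by
    rw [Psi', Psi_of_gt hx, mul_pow, ← exp_nat_mul, hs]
    field_simp
    ring_nf
  rw [mul_pow, hexp] at h
  rw [hΨ', le_div_iff₀ (exp_pos 1)]
  nlinarith

theorem abs_Psi'_le (x : ℝ) : |Psi' x| ≤ √(54 / exp 1) :=
  abs_le_sqrt (sq_Psi'_le x)

theorem hasDerivAt_Psi (x : ℝ) : HasDerivAt Psi (Psi' x) x := by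
  rcases le_or_gt x (1 / 2) with hx | hx
  · rw [Psi', Psi_of_le hx, zero_mul]
    refine hasDerivAt_zero_of_abs_sub_le_mul_sq (C := 4) fun y => ?_
    rw [Psi_of_le hx, sub_zero, abs_of_nonneg (Psi_nonneg y)]
    exact Psi_le_four_mul_sq hx
  have hu : 2 * x - 1 ≠ 0 := by linarith
  have hinner : HasDerivAt (fun y => 1 - 1 / (2 * y - 1) ^ 2) (4 / (2 * x - 1) ^ 3) x := by
    have hsq : HasDerivAt (fun y => (2 * y - 1) ^ 2) (2 * (2 * x - 1) * 2) x := by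
      simpa using (((hasDerivAt_id x).const_mul 2).sub_const 1).fun_pow 2
    refine (((hasDerivAt_const x 1).div hsq (pow_ne_zero 2 hu)).const_sub 1).congr_deriv ?_
    field_simp
    ring
  have hΨ : Psi =ᶠ[𝓝 x] fun y => exp (1 - 1 / (2 * y - 1) ^ 2) := by
    filter_upwards [Ioi_mem_nhds hx] with y hy using Psi_of_gt hy
  rw [Psi', Psi_of_gt hx]
  exact hinner.exp.congr_of_eventuallyEq hΨ

noncomputable def Phi' (y : ℝ) : ℝ := √(exp 1) * exp (-y ^ 2 / 2)

theorem integrable_exp_neg_sq_div_two : Integrable fun t : ℝ => exp (-t ^ 2 / 2) := by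
  simpa [neg_div, div_eq_inv_mul] using integrable_exp_neg_mul_sq (b := 1 / 2) (by norm_num)

theorem integral_exp_neg_sq_div_two : ∫ t : ℝ, exp (-t ^ 2 / 2) = √(2 * π) := by
  simpa [neg_div, div_eq_inv_mul] using integral_gaussian (1 / 2)

theorem Phi_nonneg (y : ℝ) : 0 ≤ Phi y :=
  mul_nonneg (sqrt_nonneg _) (setIntegral_nonneg measurableSet_Iic fun _ _ => (exp_pos _).le)

theorem abs_Phi_le (y : ℝ) : |Phi y| ≤ √(exp 1) * √(2 * π) := by
  rw [abs_of_nonneg (Phi_nonneg y), Phi, ← integral_exp_neg_sq_div_two]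
  exact mul_le_mul_of_nonneg_left (setIntegral_le_integral integrable_exp_neg_sq_div_two
    (.of_forall fun _ => (exp_pos _).le)) (sqrt_nonneg _)

theorem abs_Phi'_le (y : ℝ) : |Phi' y| ≤ √(exp 1) := by
  rw [Phi', abs_of_nonneg (by positivity)]
  refine mul_le_of_le_one_right (sqrt_nonneg _) (exp_le_one_iff.2 ?_)
  nlinarith [sq_nonneg y]

theorem hasDerivAt_Phi (y : ℝ) : HasDerivAt Phi (Phi' y) y := by
  have hcont : Continuous fun t : ℝ => exp (-t ^ 2 / 2) := by fun_prop
  have hint := integrable_exp_neg_sq_div_two.integrableOn (s := Iic 0)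
  have hPhi : Phi = fun z => √(exp 1) *
      ((∫ t in Iic 0, exp (-t ^ 2 / 2)) + ∫ t in (0 : ℝ)..z, exp (-t ^ 2 / 2)) := by
    ext z
    rw [Phi, ← intervalIntegral.integral_Iic_sub_Iic hint
      integrable_exp_neg_sq_div_two.integrableOn, add_sub_cancel]
  rw [hPhi]
  exact ((intervalIntegral.integral_hasDerivAt_right
    integrable_exp_neg_sq_div_two.intervalIntegrable
    (hcont.stronglyMeasurableAtFilter _ _) hcont.continuousAt).const_add _).const_mul _

noncomputable def fbarTerm (a b : ℝ) : ℝ := Psi (-a) * Phi (-b) - Psi a * Phi b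

noncomputable def fbarTermDerivFst (a b : ℝ) : ℝ := -(Psi' (-a) * Phi (-b) + Psi' a * Phi b)

noncomputable def fbarTermDerivSnd (a b : ℝ) : ℝ := -(Psi (-a) * Phi' (-b) + Psi a * Phi' b)

theorem HasDerivAt.fbarTerm {u v : ℝ → ℝ} {u' v' t : ℝ} (hu : HasDerivAt u u' t)
    (hv : HasDerivAt v v' t) :
    HasDerivAt (fun s => fbarTerm (u s) (v s))
      (u' * fbarTermDerivFst (u t) (v t) + v' * fbarTermDerivSnd (u t) (v t)) t := by
  have hΨ := (hasDerivAt_Psi (u t)).comp t hu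
  have hΨneg := (hasDerivAt_Psi (-u t)).comp t hu.neg
  have hΦ := (hasDerivAt_Phi (v t)).comp t hv
  have hΦneg := (hasDerivAt_Phi (-v t)).comp t hv.neg
  refine ((hΨneg.mul hΦneg).sub (hΨ.mul hΦ)).congr_deriv ?_
  simp only [fbarTermDerivFst, fbarTermDerivSnd, Function.comp_apply, Pi.neg_apply]
  ring

theorem abs_add_mul_le_of_eq_zero_or {p q : ℝ → ℝ} {a b M N : ℝ} (ha : p a = 0 ∨ p (-a) = 0)
    (hp : ∀ x, |p x| ≤ M) (hq : ∀ y, |q y| ≤ N) : |p (-a) * q (-b) + p a * q b| ≤ M * N := by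
  have hM : 0 ≤ M := (abs_nonneg _).trans (hp a)
  rcases ha with h | h <;> simp only [h, zero_mul, add_zero, zero_add, abs_mul] <;>
    exact mul_le_mul (hp _) (hq _) (abs_nonneg _) hM

theorem abs_fbarTermDerivFst_le (a b : ℝ) :
    |fbarTermDerivFst a b| ≤ √(54 / exp 1) * (√(exp 1) * √(2 * π)) := by
  rw [fbarTermDerivFst, abs_neg]
  exact abs_add_mul_le_of_eq_zero_or (Psi'_eq_zero_or_Psi'_neg_eq_zero a) abs_Psi'_le abs_Phi_le

theorem abs_fbarTermDerivSnd_le (a b : ℝ) : |fbarTermDerivSnd a b| ≤ exp 1 * √(exp 1) := by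
  rw [fbarTermDerivSnd, abs_neg]
  exact abs_add_mul_le_of_eq_zero_or (Psi_eq_zero_or_Psi_neg_eq_zero a) abs_Psi_le abs_Phi'_le

theorem exp_one_mul_sqrt_add_sqrt_le :
    exp 1 * √(exp 1) + √(54 / exp 1) * (√(exp 1) * √(2 * π)) ≤ 23 := by
  have hprod : √(54 / exp 1) * (√(exp 1) * √(2 * π)) = √(108 * π) := by
    rw [← sqrt_mul (by positivity), ← sqrt_mul (by positivity)]
    congr 1
    field_simp
    ring
  have hexp : exp 1 * √(exp 1) = √(exp 1 ^ 3) := by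
    rw [pow_succ, sqrt_mul (by positivity), sqrt_sq (exp_pos 1).le]
  have h₁ : √(exp 1 ^ 3) ≤ 4.55 :=
    sqrt_le_iff.2 ⟨by norm_num,
      (pow_le_pow_left₀ (exp_pos 1).le exp_one_lt_d9.le 3).trans (by norm_num)⟩
  have h₂ : √(108 * π) ≤ 18.45 := sqrt_le_iff.2 ⟨by norm_num, by nlinarith [pi_lt_d2]⟩
  linarith

/-- The paper's convention `x₀ = 1`: as `Psi (-1) = 0`, the first summand of `fbar` is
`fbarTerm 1 (x 0)`. -/
noncomputable def fbarPrev {T : ℕ} (x : Fin T → ℝ) (i : Fin T) : ℝ :=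
  if (i : ℕ) = 0 then 1 else x ⟨i - 1, lt_of_le_of_lt (Nat.sub_le _ _) i.isLt⟩

theorem fbar_eq_sum_fbarTerm (T : ℕ) (x : Fin T → ℝ) :
    fbar T x = ∑ i, fbarTerm (fbarPrev x i) (x i) := by
  refine Finset.sum_congr rfl fun i _ => ?_
  unfold fbarPrev fbarTerm
  split_ifs
  · rw [Psi_of_le (by norm_num : (-1 : ℝ) ≤ 1 / 2)]
    ring
  · rfl

theorem hasDerivAt_update_apply {ι : Type*} [DecidableEq ι] (x : ι → ℝ) (j k : ι) (t : ℝ) :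
    HasDerivAt (fun s => Function.update x j s k) (if k = j then 1 else 0) t := by
  simpa [Pi.single_apply] using hasDerivAt_pi.1 (hasDerivAt_update x j t) k

theorem hasDerivAt_fbarPrev_update {T : ℕ} (x : Fin T → ℝ) (j i : Fin T) (t : ℝ) :
    HasDerivAt (fun s => fbarPrev (Function.update x j s) i)
      (if (i : ℕ) = j + 1 then 1 else 0) t := by
  unfold fbarPrev
  by_cases h₀ : (i : ℕ) = 0
  · simpa only [h₀, if_true, if_neg (Nat.succ_ne_zero _).symm] using hasDerivAt_const t (1 : ℝ)
  · simp only [h₀, if_false]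
    convert hasDerivAt_update_apply x j _ t using 2
    simp only [Fin.ext_iff]
    omega

theorem hasDerivAt_fbar_update (T : ℕ) (x : Fin T → ℝ) (j : Fin T) :
    HasDerivAt (fun s => fbar T (Function.update x j s))
      (fbarTermDerivSnd (fbarPrev x j) (x j) +
        ∑ i : Fin T, if (i : ℕ) = j + 1 then fbarTermDerivFst (fbarPrev x i) (x i) else 0)
      (x j) := by
  simp_rw [fbar_eq_sum_fbarTerm]
  have h := HasDerivAt.fun_sum (u := Finset.univ) fun i _ =>
    (hasDerivAt_fbarPrev_update x j i (x j)).fbarTerm (hasDerivAt_update_apply x j i (x j))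
  simp only [Function.update_eq_self, ite_mul, one_mul, zero_mul, Finset.sum_add_distrib,
    Finset.sum_ite_eq', Finset.mem_univ, if_true] at h
  rwa [add_comm]

theorem abs_sum_ite_val_eq_le {n k : ℕ} {g : Fin n → ℝ} {M : ℝ} (hM : 0 ≤ M)
    (hg : ∀ i, |g i| ≤ M) : |∑ i : Fin n, if (i : ℕ) = k then g i else 0| ≤ M := by
  by_cases hk : k < n
  · rw [Finset.sum_eq_single ⟨k, hk⟩ (fun i _ hi => if_neg fun h => hi (Fin.ext h))
      (fun h => absurd (Finset.mem_univ _) h), if_pos rfl]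
    exact hg _
  · rw [Finset.sum_eq_zero fun (i : Fin n) _ => if_neg fun h : (i : ℕ) = k => hk (h ▸ i.isLt),
      abs_zero]
    exact hM

theorem abs_fpartial_le (T : ℕ) (x : Fin T → ℝ) (j : Fin T) : |fpartial T x j| ≤ 23 := by
  rw [fpartial, (hasDerivAt_fbar_update T x j).deriv]
  calc _ ≤ exp 1 * √(exp 1) + √(54 / exp 1) * (√(exp 1) * √(2 * π)) :=
        (abs_add_le _ _).trans (add_le_add (abs_fbarTermDerivSnd_le _ _)
          (abs_sum_ite_val_eq_le (by positivity) fun _ => abs_fbarTermDerivFst_le _ _))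
    _ ≤ 23 := exp_one_mul_sqrt_add_sqrt_le

theorem sqrt_sum_sq_le_of_abs_le {ι : Type*} [Fintype ι] {f : ι → ℝ} {C : ℝ} (hC : 0 ≤ C)
    (h : ∀ i, |f i| ≤ C) : √(∑ i, f i ^ 2) ≤ C * √(Fintype.card ι) := by
  calc √(∑ i, f i ^ 2) ≤ √(∑ _i : ι, C ^ 2) :=
        sqrt_le_sqrt <| Finset.sum_le_sum fun i _ =>
          sq_le_sq.2 (by rw [abs_of_nonneg hC]; exact h i)
    _ = C * √(Fintype.card ι) := by
        rw [Finset.sum_const, Finset.card_univ, nsmul_eq_mul, sqrt_mul' _ (sq_nonneg C),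
          sqrt_sq hC, mul_comm]

theorem stmt_7_general (T : ℕ) (x : Fin T → ℝ) :
    (∀ j : Fin T, |fpartial T x j| ≤ 23) ∧
      Real.sqrt (∑ j : Fin T, (fpartial T x j)^2) ≤ 23 * Real.sqrt T :=
  ⟨abs_fpartial_le T x,
    by simpa using sqrt_sum_sq_le_of_abs_le (by norm_num) (abs_fpartial_le T x)⟩

/-- The gradient of f̄_T is bounded: ‖∇f̄_T(x)‖_∞ ≤ 23 and ‖∇f̄_T(x)‖₂ ≤ 23√T. -/
theorem stmt_7 (T : ℕ) (hT : 1 ≤ T) (x : Fin T → ℝ) :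
    (∀ j : Fin T, |fpartial T x j| ≤ 23) ∧
      Real.sqrt (∑ j : Fin T, (fpartial T x j)^2) ≤ 23 * Real.sqrt T :=
  stmt_7_general T x
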